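/- For n ≥ 1, if b is a nonempty border of M_{2n+2}, then b ends in 0 and there is a word a with φ(a)·0 = b, and a is a border of M_{2n+1}. -/

import Mathlib

/-- The Fibonacci morphism: `false` (=0) ↦ 01, `true` (=1) ↦ 0. -/
def phi (w : List Bool) : List Bool :=
  w.flatMap (fun b => if b then [false] else [false, true])

/-- The Fibonacci words: f₁ = 1, f₂ = 0, f_{n+2} = f_{n+1} f_n. -/
def fw : ℕ → List Bool
  | 0 => []
  | 1 => [true]
  | 2 => [false]
  | (n+3) => fw (n+2) ++ fw (n+1)

/-- Palindromic prefix: f_n with its last two letters removed. -/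
def pw (n : ℕ) : List Bool := (fw n).dropLast.dropLast

/-- Minimal forbidden words of the Fibonacci word:
`M_{2n+1} = 1 p_{2n+1} 1`, `M_{2n+2} = 0 p_{2n+2} 0`. -/
def Mw (n : ℕ) : List Bool :=
  if n % 2 = 0 then false :: (pw n ++ [false]) else true :: (pw n ++ [true])

/-- Correlation bit: `corr u v k` holds iff `C_{u,v}[k] = 1`. -/
def corr {α : Type*} (u v : List α) (k : ℕ) : Prop :=
  ∀ i j : ℕ, i < u.length → j < v.length → i = j + k → u[i]? = v[j]?

/-- A border of a word is both a prefix and a suffix. -/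
def IsBorder {α : Type*} (b w : List α) : Prop := b <+: w ∧ b <:+ w

/-- The set of nonempty borders of `M_n`. -/
def Bset (n : ℕ) : Set (List Bool) := {b | b ≠ [] ∧ IsBorder b (Mw n)}

open scoped Classical in
/-- The correlation polynomial `C_{u,v}(z) = ∑_{k<|u|} C_{u,v}[k] z^{|u|-1-k}`. -/
noncomputable def corrPoly (u v : List Bool) : Polynomial ℤ :=
  ∑ k ∈ Finset.range u.length,
    if corr u v k then Polynomial.X ^ (u.length - 1 - k) else 0

open scoped Classical in
/-- The nonempty borders of `w`, as a finset. -/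
noncomputable def borderFinset (w : List Bool) : Finset (List Bool) :=
  ((Finset.range (w.length + 1)).image (fun k => w.take k)).filter
    (fun b => b ≠ [] ∧ b <:+ w)

/-!
Since `φ(f_k) = f_{k+1}` and `f_{2n+1}` ends in `01`, for `n ≥ 1` we have
`M_{2n+2} = φ(M_{2n+1}) 0`. In a word `φ(w) 0`, read as the blocks `0`, `01` of `φ` followed by a
final `0`, every `0` begins a block or is the final letter. Hence a prefix of `φ(w) 0` ending in `0`
and a suffix of it beginning with `0` are both of the form `φ(a) 0`, with `a` a prefix, respectively
a suffix, of `w`. A nonempty border of `M_{2n+2}` begins and ends with `0`, so it is `φ(a) 0` for a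
border `a` of `M_{2n+1}`.
-/

theorem phi_append (u v : List Bool) : phi (u ++ v) = phi u ++ phi v :=
  List.flatMap_append

@[simp] theorem phi_nil : phi [] = [] := rfl

@[simp] theorem phi_cons_true (w : List Bool) : phi (true :: w) = false :: phi w := rfl

@[simp] theorem phi_cons_false (w : List Bool) : phi (false :: w) = false :: true :: phi w := rfl

theorem exists_phi_append_false_eq_cons (w : List Bool) : ∃ r, phi w ++ [false] = false :: r := by
  rcases w with _ | ⟨_ | _, w⟩ <;> simp

theorem prefix_of_phi_append_false_prefix :
    ∀ {a w : List Bool}, phi a ++ [false] <+: phi w ++ [false] → a <+: w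
  | [], _, _ => List.nil_prefix
  | true :: _, [], h | false :: _, [], h => by simp at h
  | true :: _, true :: _, h | false :: _, false :: _, h => by
      simp only [phi_cons_true, phi_cons_false, List.cons_append, List.cons_prefix_cons,
        true_and] at h ⊢
      exact prefix_of_phi_append_false_prefix h
  | true :: a, false :: _, h => by
      obtain ⟨r, hr⟩ := exists_phi_append_false_eq_cons a
      simp [hr] at h
  | false :: _, true :: w, h => by
      obtain ⟨r, hr⟩ := exists_phi_append_false_eq_cons w
      simp [hr] at h

theorem exists_suffix_of_cons_false_suffix :
    ∀ {w c : List Bool}, false :: c <:+ phi w ++ [false] →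
      ∃ a, a <:+ w ∧ phi a ++ [false] = false :: c
  | [], c, h => ⟨[], List.nil_suffix, by simp_all [List.suffix_cons_iff]⟩
  | true :: w, c, h => by
      rw [phi_cons_true, List.cons_append, List.suffix_cons_iff] at h
      rcases h with h | h
      · exact ⟨true :: w, List.suffix_refl _, by simp [h]⟩
      · obtain ⟨a, ha, e⟩ := exists_suffix_of_cons_false_suffix h
        exact ⟨a, ha.trans (List.suffix_cons _ _), e⟩
  | false :: w, c, h => by
      rw [phi_cons_false, List.cons_append, List.cons_append, List.suffix_cons_iff,
        List.suffix_cons_iff] at h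
      rcases h with h | h | h
      · exact ⟨false :: w, List.suffix_refl _, by simp [h]⟩
      · simp at h
      · obtain ⟨a, ha, e⟩ := exists_suffix_of_cons_false_suffix h
        exact ⟨a, ha.trans (List.suffix_cons _ _), e⟩

theorem isBorder_phi_append_false {w b : List Bool} (hne : b ≠ [])
    (hb : IsBorder b (phi w ++ [false])) :
    b.getLast hne = false ∧ ∃ a, phi a ++ [false] = b ∧ IsBorder a w := by
  obtain ⟨hpre, hsuf⟩ := hb
  refine ⟨by simpa using hsuf.getLast hne, ?_⟩
  obtain ⟨c, rfl⟩ : ∃ c, b = false :: c := by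
    obtain ⟨r, hr⟩ := exists_phi_append_false_eq_cons w
    obtain ⟨x, c, rfl⟩ := List.exists_cons_of_ne_nil hne
    rw [hr, List.cons_prefix_cons] at hpre
    exact ⟨c, by rw [hpre.1]⟩
  obtain ⟨a, ha, e⟩ := exists_suffix_of_cons_false_suffix hsuf
  rw [← e] at hpre
  exact ⟨a, e, prefix_of_phi_append_false_prefix hpre, ha⟩

theorem phi_fw : ∀ k, phi (fw (k + 1)) = fw (k + 2)
  | 0 | 1 => rfl
  | k + 2 => by
      rw [show fw (k + 3) = fw (k + 2) ++ fw (k + 1) from rfl, phi_append, phi_fw (k + 1),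
        phi_fw k]
      rfl

theorem exists_fw_two_mul_add_three_eq : ∀ m, ∃ u, fw (2 * m + 3) = u ++ [false, true]
  | 0 => ⟨[], rfl⟩
  | m + 1 => by
      obtain ⟨u, hu⟩ := exists_fw_two_mul_add_three_eq m
      refine ⟨fw (2 * m + 4) ++ u, ?_⟩
      rw [show fw (2 * (m + 1) + 3) = fw (2 * m + 4) ++ fw (2 * m + 3) from rfl, hu,
        List.append_assoc]

theorem pw_of_fw_eq_append {k : ℕ} {u : List Bool} {x y : Bool} (h : fw k = u ++ [x, y]) :
    pw k = u := by
  rw [pw, h, show u ++ [x, y] = u ++ [x] ++ [y] by simp, List.dropLast_concat,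
    List.dropLast_concat]

theorem Mw_two_mul_add_two {n : ℕ} (hn : 1 ≤ n) :
    Mw (2 * n + 2) = phi (Mw (2 * n + 1)) ++ [false] := by
  obtain ⟨m, rfl⟩ : ∃ m, n = m + 1 := ⟨n - 1, by omega⟩
  obtain ⟨u, hu⟩ := exists_fw_two_mul_add_three_eq m
  have hv : fw (2 * m + 4) = phi u ++ [false] ++ [true, false] := by
    rw [← phi_fw (2 * m + 2), hu, phi_append]
    simp
  rw [show 2 * (m + 1) + 2 = 2 * m + 4 by ring, show 2 * (m + 1) + 1 = 2 * m + 3 by ring, Mw, Mw,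
    if_pos (by omega), if_neg (by omega), pw_of_fw_eq_append hv, pw_of_fw_eq_append hu]
  simp [phi_append]

theorem stmt13 (n : ℕ) (hn : 1 ≤ n) (b : List Bool) (hne : b ≠ [])
    (hb : IsBorder b (Mw (2*n+2))) :
    b.getLast hne = false ∧
    ∃ a : List Bool, phi a ++ [false] = b ∧ IsBorder a (Mw (2*n+1)) := by
  rw [Mw_two_mul_add_two hn] at hb
  exact isBorder_phi_append_false hne hb
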